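/- (Helly theorem in RN modules, necessity direction) Let (E,‖·‖) be a random normed module over ℂ with base (Ω,𝓕,P), f₁,…,fₙ ∈ E*, ξ₁,…,ξₙ ∈ L⁰(𝓕,ℂ), and β ∈ L⁰₊. Suppose that for every ε ∈ L⁰₊₊ there exists x_ε ∈ E with fᵢ(x_ε) = ξᵢ for all i and ‖x_ε‖ ≤ β + ε. Then for all λ₁,…,λₙ ∈ L⁰(𝓕,ℂ) one has |Σₖ λₖ ξₖ| ≤ β · ‖Σₖ λₖ fₖ‖* in L⁰. -/

import Mathlib

open MeasureTheory

noncomputable instance AEEqFun.instCommRing' {α γ : Type*} [MeasurableSpace α] {μ : Measure α}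
    [TopologicalSpace γ] [CommRing γ] [IsTopologicalRing γ] : CommRing (α →ₘ[μ] γ) :=
  { (inferInstance : AddCommGroup (α →ₘ[μ] γ)),
    (inferInstance : CommMonoid (α →ₘ[μ] γ)) with
    left_distrib := fun f g h => by
      apply AEEqFun.ext
      filter_upwards [AEEqFun.coeFn_mul f (g + h), AEEqFun.coeFn_add g h,
        AEEqFun.coeFn_mul f g, AEEqFun.coeFn_mul f h,
        AEEqFun.coeFn_add (f * g) (f * h)] with a h1 h2 h3 h4 h5
      simp only [Pi.mul_apply, Pi.add_apply] at *
      rw [h1, h2, h5, h3, h4, mul_add]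
    right_distrib := fun f g h => by
      apply AEEqFun.ext
      filter_upwards [AEEqFun.coeFn_mul (f + g) h, AEEqFun.coeFn_add f g,
        AEEqFun.coeFn_mul f h, AEEqFun.coeFn_mul g h,
        AEEqFun.coeFn_add (f * h) (g * h)] with a h1 h2 h3 h4 h5
      simp only [Pi.mul_apply, Pi.add_apply] at *
      rw [h1, h2, h5, h3, h4, add_mul]
    zero_mul := fun f => by
      apply AEEqFun.ext
      filter_upwards [AEEqFun.coeFn_mul 0 f, AEEqFun.coeFn_zero (α := α) (μ := μ) (β := γ)]
        with a h1 h2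
      simp only [Pi.mul_apply] at *
      rw [h1, h2]
      simp
    mul_zero := fun f => by
      apply AEEqFun.ext
      filter_upwards [AEEqFun.coeFn_mul f 0, AEEqFun.coeFn_zero (α := α) (μ := μ) (β := γ)]
        with a h1 h2
      simp only [Pi.mul_apply] at *
      rw [h1, h2]
      simp }

namespace RNM

variable {Ω : Type} [MeasurableSpace Ω] {P : Measure Ω}

/-- the pointwise absolute value `L⁰(𝓕,ℂ) → L⁰(𝓕,ℝ)`. -/
noncomputable def L0abs (ξ : Ω →ₘ[P] ℂ) : Ω →ₘ[P] ℝ :=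
  ξ.comp (fun z => ‖z‖) continuous_norm

/-- the canonical embedding `L⁰(𝓕,ℝ) → L⁰(𝓕,ℂ)`. -/
noncomputable def ofRealC (ξ : Ω →ₘ[P] ℝ) : Ω →ₘ[P] ℂ :=
  ξ.comp Complex.ofReal Complex.continuous_ofReal

/-- pointwise complex conjugation on `L⁰(𝓕,ℂ)`. -/
noncomputable def conjC (ξ : Ω →ₘ[P] ℂ) : Ω →ₘ[P] ℂ :=
  ξ.comp (fun z => starRingEnd ℂ z) Complex.continuous_conj

/-- `ξ ∈ L⁰₊₊`, i.e. `ξ > 0` a.e. on `Ω`. -/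
def L0pos (ξ : Ω →ₘ[P] ℝ) : Prop := ∀ᵐ ω ∂P, 0 < ξ ω

/-- `ξ < η` (a.e.) on the whole of `Ω`. -/
def ltAE (ξ η : Ω →ₘ[P] ℝ) : Prop := ∀ᵐ ω ∂P, ξ ω < η ω

/-- the equivalence class `Ĩ_A ∈ L⁰(𝓕,ℂ)` of the indicator of a measurable set `A`. -/
noncomputable def indC (A : Set Ω) (hA : MeasurableSet A) : Ω →ₘ[P] ℂ :=
  AEEqFun.mk (A.indicator fun _ => (1 : ℂ)) (aestronglyMeasurable_const.indicator hA)

/-- the equivalence class `Ĩ_A ∈ L⁰(𝓕,ℝ)` of the indicator of a measurable set `A`. -/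
noncomputable def indR (A : Set Ω) (hA : MeasurableSet A) : Ω →ₘ[P] ℝ :=
  AEEqFun.mk (A.indicator fun _ => (1 : ℝ)) (aestronglyMeasurable_const.indicator hA)

section AELemmas

lemma L0abs_ae (ξ : Ω →ₘ[P] ℂ) : ∀ᵐ ω ∂P, (L0abs ξ) ω = ‖ξ ω‖ :=
  AEEqFun.coeFn_comp _ _ ξ

lemma le_ae {ξ η : Ω →ₘ[P] ℝ} (h : ξ ≤ η) : ∀ᵐ ω ∂P, ξ ω ≤ η ω :=
  AEEqFun.coeFn_le.2 h

lemma le_of_ae {ξ η : Ω →ₘ[P] ℝ} (h : ∀ᵐ ω ∂P, ξ ω ≤ η ω) : ξ ≤ η :=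
  AEEqFun.coeFn_le.1 h

lemma mul_ae {γ : Type*} [TopologicalSpace γ] [CommRing γ] [IsTopologicalRing γ]
    (ξ η : Ω →ₘ[P] γ) : ∀ᵐ ω ∂P, (ξ * η) ω = ξ ω * η ω :=
  AEEqFun.coeFn_mul ξ η

lemma add_ae {γ : Type*} [TopologicalSpace γ] [AddGroup γ] [IsTopologicalAddGroup γ]
    (ξ η : Ω →ₘ[P] γ) : ∀ᵐ ω ∂P, (ξ + η) ω = ξ ω + η ω :=
  AEEqFun.coeFn_add ξ η

lemma sub_ae {γ : Type*} [TopologicalSpace γ] [AddGroup γ] [IsTopologicalAddGroup γ]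
    (ξ η : Ω →ₘ[P] γ) : ∀ᵐ ω ∂P, (ξ - η) ω = ξ ω - η ω :=
  AEEqFun.coeFn_sub ξ η

lemma zero_ae (γ : Type*) [TopologicalSpace γ] [Zero γ] :
    ∀ᵐ ω ∂P, (0 : Ω →ₘ[P] γ) ω = 0 :=
  AEEqFun.coeFn_zero

lemma one_ae (γ : Type*) [TopologicalSpace γ] [One γ] :
    ∀ᵐ ω ∂P, (1 : Ω →ₘ[P] γ) ω = 1 :=
  AEEqFun.coeFn_one

end AELemmas

/-- a countable measurable partition of `Ω`. -/
structure IsMPartition (A : ℕ → Set Ω) : Prop where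
  meas : ∀ n, MeasurableSet (A n)
  disj : Pairwise (Function.onFun Disjoint A)
  cover : (⋃ n, A n) = Set.univ

section Module

variable {E : Type*} [AddCommGroup E] [Module (Ω →ₘ[P] ℂ) E]

variable (P E) in
/-- `E` has the countable concatenation property. -/
def HasCCP : Prop :=
  ∀ (A : ℕ → Set Ω) (hA : IsMPartition A) (x : ℕ → E),
    ∃ x0 : E, ∀ n, indC (P := P) (A n) (hA.meas n) • x0 = indC (P := P) (A n) (hA.meas n) • x n

/-- a subset `S` of `E` has the countable concatenation property. -/
def SetCCP (S : Set E) : Prop :=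
  ∀ (A : ℕ → Set Ω) (hA : IsMPartition A) (x : ℕ → E), (∀ n, x n ∈ S) →
    ∃ x0 ∈ S, ∀ n, indC (P := P) (A n) (hA.meas n) • x0 = indC (P := P) (A n) (hA.meas n) • x n

/-- the countable concatenation hull `H_cc(S)` of a subset `S` of `E`. -/
def Hcc (S : Set E) : Set E :=
  {x | ∃ (A : ℕ → Set Ω) (hA : IsMPartition A) (m : ℕ → E), (∀ n, m n ∈ S) ∧
    ∀ n, indC (P := P) (A n) (hA.meas n) • x = indC (P := P) (A n) (hA.meas n) • m n}

/-- `L⁰`-convexity of a subset of an `L⁰(𝓕,ℂ)`-module. -/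
def L0Convex (S : Set E) : Prop :=
  ∀ x ∈ S, ∀ y ∈ S, ∀ ξ : Ω →ₘ[P] ℝ, 0 ≤ ξ → ξ ≤ 1 →
    ofRealC ξ • x + ofRealC (1 - ξ) • y ∈ S

/-- the random-norm axioms for `nrm : E → L⁰₊`, making `(E, nrm)` an `RN` module over `ℂ`. -/
structure IsRNNorm (nrm : E → (Ω →ₘ[P] ℝ)) : Prop where
  nonneg : ∀ x, 0 ≤ nrm x
  eq_zero_iff : ∀ x, nrm x = 0 ↔ x = 0
  smul_eq : ∀ (ξ : Ω →ₘ[P] ℂ) (x : E), nrm (ξ • x) = L0abs ξ * nrm x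
  add_le : ∀ x y, nrm (x + y) ≤ nrm x + nrm y

/-- the submodule of `P`-a.e. bounded random linear functionals on `(E, nrm)`:
the random conjugate space `E*`. -/
noncomputable def rdual (nrm : E → (Ω →ₘ[P] ℝ)) :
    Submodule (Ω →ₘ[P] ℂ) (E →ₗ[Ω →ₘ[P] ℂ] (Ω →ₘ[P] ℂ)) where
  carrier := {f | ∃ ξ : Ω →ₘ[P] ℝ, 0 ≤ ξ ∧ ∀ x, L0abs (f x) ≤ ξ * nrm x}
  zero_mem' := by
    refine ⟨0, le_refl 0, fun x => ?_⟩
    apply le_of_ae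
    have e0 : ((0 : E →ₗ[Ω →ₘ[P] ℂ] (Ω →ₘ[P] ℂ)) x) = (0 : Ω →ₘ[P] ℂ) := rfl
    filter_upwards [L0abs_ae ((0 : E →ₗ[Ω →ₘ[P] ℂ] (Ω →ₘ[P] ℂ)) x),
      mul_ae (0 : Ω →ₘ[P] ℝ) (nrm x), zero_ae ℝ, zero_ae ℂ] with ω h1 h2 h3 h4
    rw [h1, h2, h3, e0, h4]
    simp
  add_mem' := by
    rintro f g ⟨ξ, hξ0, hξ⟩ ⟨η, hη0, hη⟩
    have hsum : (0 : Ω →ₘ[P] ℝ) ≤ ξ + η := by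
      apply le_of_ae
      filter_upwards [le_ae hξ0, le_ae hη0, add_ae ξ η, zero_ae ℝ] with ω h1 h2 h3 h4
      rw [h3, h4]
      rw [h4] at h1 h2
      linarith
    refine ⟨ξ + η, hsum, fun x => ?_⟩
    apply le_of_ae
    have e1 : ((f + g) x) = f x + g x := rfl
    filter_upwards [L0abs_ae ((f + g) x), add_ae (f x) (g x),
      mul_ae (ξ + η) (nrm x), add_ae ξ η, mul_ae ξ (nrm x), mul_ae η (nrm x),
      le_ae (hξ x), le_ae (hη x), L0abs_ae (f x), L0abs_ae (g x)]
      with ω h1 h2 h3 h4 h5 h6 h7 h8 h9 h10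
    rw [h1, h3, h4, e1, h2]
    rw [h9, h5] at h7
    rw [h10, h6] at h8
    calc ‖f x ω + g x ω‖ ≤ ‖f x ω‖ + ‖g x ω‖ :=
          norm_add_le _ _
      _ ≤ ξ ω * nrm x ω + η ω * nrm x ω := add_le_add h7 h8
      _ = (ξ ω + η ω) * nrm x ω := by ring
  smul_mem' := by
    rintro c f ⟨ξ, hξ0, hξ⟩
    have hpos : (0 : Ω →ₘ[P] ℝ) ≤ L0abs c * ξ := by
      apply le_of_ae
      filter_upwards [mul_ae (L0abs c) ξ, L0abs_ae c, le_ae hξ0, zero_ae ℝ]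
        with ω h1 h2 h3 h4
      rw [h1, h2, h4]
      rw [h4] at h3
      positivity
    refine ⟨L0abs c * ξ, hpos, fun x => ?_⟩
    apply le_of_ae
    have e1 : ((c • f) x) = c * f x := rfl
    filter_upwards [L0abs_ae ((c • f) x), mul_ae c (f x),
      mul_ae (L0abs c * ξ) (nrm x), mul_ae (L0abs c) ξ, L0abs_ae c,
      le_ae (hξ x), L0abs_ae (f x), mul_ae ξ (nrm x)] with ω h1 h2 h3 h4 h5 h6 h7 h8
    rw [h1, h3, h4, h5, e1, h2]
    rw [h7, h8] at h6
    have h0 : (0:ℝ) ≤ ‖c ω‖ := norm_nonneg _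
    calc ‖c ω * f x ω‖ = ‖c ω‖ * ‖f x ω‖ := norm_mul _ _
      _ ≤ ‖c ω‖ * (ξ ω * nrm x ω) := mul_le_mul_of_nonneg_left h6 h0
      _ = ‖c ω‖ * ξ ω * nrm x ω := by ring

/-- the conjugate random norm `‖f‖* = ⋁{|f(y)| : ‖y‖ ≤ 1}` (the lattice supremum, when
it exists). -/
noncomputable def dnorm (nrm : E → (Ω →ₘ[P] ℝ))
    (f : E →ₗ[Ω →ₘ[P] ℂ] (Ω →ₘ[P] ℂ)) : Ω →ₘ[P] ℝ := by
  classical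
  exact if h : ∃ s : Ω →ₘ[P] ℝ, IsLUB {a | ∃ y : E, nrm y ≤ 1 ∧ a = L0abs (f y)} s
    then h.choose else 0

/-- the random natural embedding of `E` into functionals on its random conjugate space. -/
noncomputable def Jmap (nrm : E → (Ω →ₘ[P] ℝ)) (x : E) :
    (↥(rdual nrm)) →ₗ[Ω →ₘ[P] ℂ] (Ω →ₘ[P] ℂ) where
  toFun f := f.1 x
  map_add' f g := rfl
  map_smul' c f := rfl

end Module

section Topologies

/-- a topology built from a directed family of "balls". -/
def ballTop {X ι : Type*} [Nonempty ι] (ball : X → ι → Set X)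
    (dir : ∀ x i j, ∃ k, ball x k ⊆ ball x i ∩ ball x j) : TopologicalSpace X where
  IsOpen B := ∀ x ∈ B, ∃ i, ball x i ⊆ B
  isOpen_univ := fun x _ => ⟨Classical.arbitrary ι, fun _ _ => trivial⟩
  isOpen_inter := fun B C hB hC x hx => by
    obtain ⟨i, hi⟩ := hB x hx.1
    obtain ⟨j, hj⟩ := hC x hx.2
    obtain ⟨k, hk⟩ := dir x i j
    exact ⟨k, fun y hy => ⟨hi (hk hy).1, hj (hk hy).2⟩⟩
  isOpen_sUnion := fun S hS x hx => by
    obtain ⟨B, hB, hxB⟩ := hx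
    obtain ⟨i, hi⟩ := hS B hB x hxB
    exact ⟨i, fun y hy => ⟨B, hB, hi hy⟩⟩

instance L0posNonempty : Nonempty {ε : Ω →ₘ[P] ℝ // L0pos ε} := by
  refine ⟨⟨1, ?_⟩⟩
  filter_upwards [one_ae (P := P) ℝ] with ω h
  rw [h]; exact one_pos

instance : Nonempty {e : ℝ // 0 < e} := ⟨⟨1, one_pos⟩⟩

instance : Nonempty {l : ℝ // 0 < l ∧ l < 1} := ⟨⟨1/2, by norm_num⟩⟩

lemma L0pos_inf {ε δ : Ω →ₘ[P] ℝ} (hε : L0pos ε) (hδ : L0pos δ) : L0pos (ε ⊓ δ) := by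
  filter_upwards [hε, hδ, AEEqFun.coeFn_inf ε δ] with ω h1 h2 h3
  rw [h3]; exact lt_inf_iff.2 ⟨h1, h2⟩

lemma ltAE_inf {a ε δ : Ω →ₘ[P] ℝ} (h : ltAE a (ε ⊓ δ)) : ltAE a ε ∧ ltAE a δ := by
  constructor
  · filter_upwards [h, AEEqFun.coeFn_inf ε δ] with ω h1 h2
    rw [h2] at h1; exact h1.trans_le inf_le_left
  · filter_upwards [h, AEEqFun.coeFn_inf ε δ] with ω h1 h2
    rw [h2] at h1; exact h1.trans_le inf_le_right

variable {E : Type*} [AddCommGroup E] [Module (Ω →ₘ[P] ℂ) E]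

/-- the locally `L⁰`-convex topology `𝓣_c` on an `RN` module `(E, nrm)`. -/
noncomputable def TcTop (nrm : E → (Ω →ₘ[P] ℝ)) : TopologicalSpace E :=
  ballTop (ι := {ε : Ω →ₘ[P] ℝ // L0pos ε})
    (fun x ε => {y | ltAE (nrm (y - x)) ε.1})
    (by
      rintro x ⟨ε, hε⟩ ⟨δ, hδ⟩
      exact ⟨⟨ε ⊓ δ, L0pos_inf hε hδ⟩, fun y hy => ⟨(ltAE_inf hy).1, (ltAE_inf hy).2⟩⟩)

/-- the `(ε,λ)`-topology `𝓣_{ε,λ}` on an `RN` module `(E, nrm)`. -/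
noncomputable def TelTop (nrm : E → (Ω →ₘ[P] ℝ)) : TopologicalSpace E :=
  ballTop (ι := {e : ℝ // 0 < e} × {l : ℝ // 0 < l ∧ l < 1})
    (fun x i => {y | ENNReal.ofReal (1 - i.2.1) < P {ω | nrm (y - x) ω < i.1.1}})
    (by
      rintro x ⟨⟨e₁, he₁⟩, ⟨l₁, hl₁⟩⟩ ⟨⟨e₂, he₂⟩, ⟨l₂, hl₂⟩⟩
      refine ⟨⟨⟨min e₁ e₂, lt_min he₁ he₂⟩,
        ⟨min l₁ l₂, lt_min hl₁.1 hl₂.1, lt_of_le_of_lt (min_le_left _ _) hl₁.2⟩⟩,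
        fun y hy => ⟨?_, ?_⟩⟩ <;> simp only [Set.mem_setOf_eq] at hy ⊢
      · refine lt_of_le_of_lt (ENNReal.ofReal_le_ofReal (by
          have := min_le_left l₁ l₂; linarith)) (hy.trans_le (measure_mono fun ω hω =>
          show nrm (y - x) ω < e₁ from lt_of_lt_of_le hω (min_le_left _ _)))
      · refine lt_of_le_of_lt (ENNReal.ofReal_le_ofReal (by
          have := min_le_right l₁ l₂; linarith)) (hy.trans_le (measure_mono fun ω hω =>
          show nrm (y - x) ω < e₂ from lt_of_lt_of_le hω (min_le_right _ _))))

variable (P) in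
/-- the locally `L⁰`-convex weak star topology `σ_c` on the space of random linear
functionals on a module `M`, induced by the pairing with `M`. -/
noncomputable def sigmaCTop (M : Type*) [AddCommGroup M] [Module (Ω →ₘ[P] ℂ) M] :
    TopologicalSpace (M →ₗ[Ω →ₘ[P] ℂ] (Ω →ₘ[P] ℂ)) :=
  ballTop (ι := Finset M × {ε : Ω →ₘ[P] ℝ // L0pos ε})
    (fun g i => {h | ∀ x ∈ i.1, ltAE (L0abs (h x - g x)) i.2.1})
    (by
      classical
      rintro g ⟨s, ε, hε⟩ ⟨t, δ, hδ⟩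
      refine ⟨⟨s ∪ t, ⟨ε ⊓ δ, L0pos_inf hε hδ⟩⟩, fun h hh => ⟨?_, ?_⟩⟩
      · exact fun x hx => (ltAE_inf (hh x (Finset.mem_union_left t hx))).1
      · exact fun x hx => (ltAE_inf (hh x (Finset.mem_union_right s hx))).2)

variable (P) in
/-- the `(ε,λ)` weak star topology `σ_{(ε,λ)}` on the space of random linear functionals
on a module `M`, induced by the pairing with `M`. -/
noncomputable def sigmaElTop (M : Type*) [AddCommGroup M] [Module (Ω →ₘ[P] ℂ) M] :
    TopologicalSpace (M →ₗ[Ω →ₘ[P] ℂ] (Ω →ₘ[P] ℂ)) :=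
  ballTop (ι := Finset M × {e : ℝ // 0 < e} × {l : ℝ // 0 < l ∧ l < 1})
    (fun g i => {h | ∀ x ∈ i.1,
      ENNReal.ofReal (1 - i.2.2.1) < P {ω | (L0abs (h x - g x)) ω < i.2.1.1}})
    (by
      classical
      rintro g ⟨s, ⟨e₁, he₁⟩, ⟨l₁, hl₁⟩⟩ ⟨t, ⟨e₂, he₂⟩, ⟨l₂, hl₂⟩⟩
      refine ⟨⟨s ∪ t, ⟨min e₁ e₂, lt_min he₁ he₂⟩,
        ⟨min l₁ l₂, lt_min hl₁.1 hl₂.1, lt_of_le_of_lt (min_le_left _ _) hl₁.2⟩⟩,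
        fun h hh => ⟨fun x hx => ?_, fun x hx => ?_⟩⟩
      · refine lt_of_le_of_lt (ENNReal.ofReal_le_ofReal (by
          have := min_le_left l₁ l₂; linarith))
          ((hh x (Finset.mem_union_left t hx)).trans_le (measure_mono fun ω hω =>
            show (L0abs (h x - g x)) ω < e₁ from lt_of_lt_of_le hω (min_le_left _ _)))
      · refine lt_of_le_of_lt (ENNReal.ofReal_le_ofReal (by
          have := min_le_right l₁ l₂; linarith))
          ((hh x (Finset.mem_union_right s hx)).trans_le (measure_mono fun ω hω =>
            show (L0abs (h x - g x)) ω < e₂ from lt_of_lt_of_le hω (min_le_right _ _))))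

end Topologies

end RNM

/-! If `fᵢ(x) = ξᵢ` for all `i` and `g = Σ λₖ fₖ`, then `Σ λₖ ξₖ = g(x)`, and
`|g(x)| ≤ ‖g‖* ‖x‖ ≤ ‖g‖* (β + ε)`; letting `ε ↓ 0` gives the claim.

The point needing work is that `‖g‖*` is an actual supremum in `L⁰`, i.e. Dedekind completeness
of `L⁰(𝓕, ℝ)`: for a bounded set `S`, choose an increasing sequence of finite suprema of `S`
that maximises the bounded, strictly monotone functional `ξ ↦ ∫ arctan ξ dP`. Its a.e. limit `G`
is an upper bound, since adjoining any `s ∈ S` cannot raise the functional and hence does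
not change `G`. -/

open MeasureTheory Filter Topology Set

namespace MeasureTheory

variable {Ω : Type*} [MeasurableSpace Ω] {P : Measure Ω}

lemma integrable_arctan_comp [IsFiniteMeasure P] {f : Ω → ℝ} (hf : AEStronglyMeasurable f P) :
    Integrable (fun ω => Real.arctan (f ω)) P :=
  .of_bound (Real.continuous_arctan.comp_aestronglyMeasurable hf) (Real.pi / 2) <|
    ae_of_all _ fun _ => abs_le.2
      ⟨(Real.neg_pi_div_two_lt_arctan _).le, (Real.arctan_lt_pi_div_two _).le⟩

namespace AEEqFun

instance : ZeroLEOneClass (Ω →ₘ[P] ℝ) where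
  zero_le_one := coeFn_le.1 <| by
    filter_upwards [coeFn_zero (β := ℝ), coeFn_one (β := ℝ)] with ω h0 h1
    rw [h0, h1]
    exact zero_le_one

instance : PosMulMono (Ω →ₘ[P] ℝ) where
  mul_le_mul_of_nonneg_left c hc a b hab := coeFn_le.1 <| by
    filter_upwards [coeFn_le.2 hc, coeFn_le.2 hab, coeFn_mul c a, coeFn_mul c b,
      coeFn_zero (β := ℝ)] with ω hc hab hca hcb h0
    rw [hca, hcb]
    rw [h0] at hc
    exact mul_le_mul_of_nonneg_left hab hc

section ArctanIntegral

variable [IsFiniteMeasure P]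

noncomputable def arctanIntegral (ξ : Ω →ₘ[P] ℝ) : ℝ := ∫ ω, Real.arctan (ξ ω) ∂P

lemma arctanIntegral_mono : Monotone (arctanIntegral (P := P)) := fun ξ η h =>
  integral_mono_ae (integrable_arctan_comp ξ.aestronglyMeasurable)
    (integrable_arctan_comp η.aestronglyMeasurable)
    (by filter_upwards [coeFn_le.2 h] with ω hω using Real.arctan_strictMono.monotone hω)

lemma bddAbove_range_arctanIntegral : BddAbove (range (arctanIntegral (P := P))) := by
  refine ⟨∫ _, Real.pi / 2 ∂P, ?_⟩
  rintro _ ⟨ξ, rfl⟩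
  exact integral_mono (integrable_arctan_comp ξ.aestronglyMeasurable) (integrable_const _)
    fun _ => (Real.arctan_lt_pi_div_two _).le

lemma eq_of_le_of_arctanIntegral_le {ξ η : Ω →ₘ[P] ℝ} (h : ξ ≤ η)
    (h' : arctanIntegral η ≤ arctanIntegral ξ) : ξ = η := by
  have hae : (fun ω => Real.arctan (ξ ω)) =ᵐ[P] fun ω => Real.arctan (η ω) :=
    (integral_eq_iff_of_ae_le (integrable_arctan_comp ξ.aestronglyMeasurable)
      (integrable_arctan_comp η.aestronglyMeasurable)
      (by filter_upwards [coeFn_le.2 h] with ω hω using Real.arctan_strictMono.monotone hω)).1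
      (le_antisymm (arctanIntegral_mono h) h')
  exact ext (hae.mono fun _ hω => Real.arctan_injective hω)

lemma tendsto_arctanIntegral {g : ℕ → Ω →ₘ[P] ℝ} {G : Ω →ₘ[P] ℝ}
    (h : ∀ᵐ ω ∂P, Tendsto (fun n => g n ω) atTop (𝓝 (G ω))) :
    Tendsto (fun n => arctanIntegral (g n)) atTop (𝓝 (arctanIntegral G)) :=
  tendsto_integral_of_dominated_convergence (fun _ => Real.pi / 2)
    (fun n => (integrable_arctan_comp (g n).aestronglyMeasurable).1) (integrable_const _)
    (fun _ => ae_of_all _ fun _ => abs_le.2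
      ⟨(Real.neg_pi_div_two_lt_arctan _).le, (Real.arctan_lt_pi_div_two _).le⟩)
    (h.mono fun _ hω => (Real.continuous_arctan.tendsto _).comp hω)

end ArctanIntegral

lemma exists_tendsto_ae_of_monotone {g : ℕ → Ω →ₘ[P] ℝ} (hg : Monotone g)
    (hb : BddAbove (range g)) :
    ∃ G : Ω →ₘ[P] ℝ, ∀ᵐ ω ∂P, Tendsto (fun n => g n ω) atTop (𝓝 (G ω)) := by
  obtain ⟨b, hb⟩ := hb
  have hmono : ∀ᵐ ω ∂P, ∀ n, g n ω ≤ g (n + 1) ω :=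
    ae_all_iff.2 fun n => coeFn_le.2 (hg n.le_succ)
  have hbdd : ∀ᵐ ω ∂P, ∀ n, g n ω ≤ b ω :=
    ae_all_iff.2 fun n => coeFn_le.2 (hb ⟨n, rfl⟩)
  have hsup : AEStronglyMeasurable (fun ω => ⨆ n, g n ω) P :=
    (AEMeasurable.iSup fun n => (g n).aemeasurable).aestronglyMeasurable
  refine ⟨mk _ hsup, ?_⟩
  filter_upwards [hmono, hbdd, coeFn_mk _ hsup] with ω hmono hbdd hG
  rw [hG]
  exact tendsto_atTop_ciSup (monotone_nat_of_le_succ hmono) ⟨b ω, forall_mem_range.2 hbdd⟩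

lemma le_of_tendsto_ae {g : ℕ → Ω →ₘ[P] ℝ} {G c : Ω →ₘ[P] ℝ}
    (hG : ∀ᵐ ω ∂P, Tendsto (fun n => g n ω) atTop (𝓝 (G ω))) (hc : ∀ n, g n ≤ c) : G ≤ c := by
  refine coeFn_le.1 ?_
  filter_upwards [hG, ae_all_iff.2 fun n => coeFn_le.2 (hc n)] with ω hω hc
  exact le_of_tendsto' hω hc

theorem exists_isLUB [IsFiniteMeasure P] {S : Set (Ω →ₘ[P] ℝ)} (hne : S.Nonempty)
    (hS : BddAbove S) : ∃ s, IsLUB S s := by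
  obtain ⟨b, hb⟩ := hS
  set T := supClosure S
  have hTS : upperBounds T = upperBounds S := upperBounds_supClosure S
  set M := sSup (arctanIntegral '' T)
  have hMT : ∀ ξ ∈ T, arctanIntegral ξ ≤ M := fun ξ hξ =>
    le_csSup (bddAbove_range_arctanIntegral.mono (image_subset_range _ _)) ⟨ξ, hξ, rfl⟩
  obtain ⟨u, -, hu, huT⟩ := exists_seq_tendsto_sSup
    ((hne.mono subset_supClosure).image arctanIntegral)
    (bddAbove_range_arctanIntegral.mono (image_subset_range _ _))
  choose v hvT hv using huT
  set g := partialSups v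
  have hgT : ∀ n, g n ∈ T := fun n =>
    supClosed_supClosure.finsetSup'_mem Finset.nonempty_Iic fun i _ => hvT i
  obtain ⟨G, hG⟩ := exists_tendsto_ae_of_monotone (partialSups_monotone v)
    ⟨b, forall_mem_range.2 fun n => (hTS ▸ hb : b ∈ upperBounds T) (hgT n)⟩
  have hMG : M ≤ arctanIntegral G :=
    le_of_tendsto_of_tendsto' (hu.congr fun n => (hv n).symm) (tendsto_arctanIntegral hG)
      fun n => arctanIntegral_mono (le_partialSups v n)
  refine ⟨G, fun s hs => ?_, fun c hc => le_of_tendsto_ae hG fun n => ?_⟩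
  · have hGs : ∀ᵐ ω ∂P, Tendsto (fun n => (g n ⊔ s) ω) atTop (𝓝 ((G ⊔ s) ω)) := by
      filter_upwards [hG, coeFn_sup G s, ae_all_iff.2 fun n => coeFn_sup (g n) s]
        with ω hω hsup hsups
      simp only [hsup, hsups]
      exact hω.max tendsto_const_nhds
    have hle : arctanIntegral (G ⊔ s) ≤ arctanIntegral G :=
      (le_of_tendsto' (tendsto_arctanIntegral hGs) fun n =>
        hMT _ (supClosed_supClosure (hgT n) (subset_supClosure hs))).trans hMG
    exact sup_eq_left.1 (eq_of_le_of_arctanIntegral_le le_sup_left hle).symm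
  · exact (hTS ▸ hc : c ∈ upperBounds T) (hgT n)

end AEEqFun

end MeasureTheory

namespace RNM

variable {Ω : Type} [MeasurableSpace Ω] {P : Measure Ω}

lemma L0abs_nonneg (ξ : Ω →ₘ[P] ℂ) : 0 ≤ L0abs ξ :=
  le_of_ae <| by
    filter_upwards [L0abs_ae ξ, zero_ae ℝ] with ω h h0
    rw [h, h0]
    exact norm_nonneg _

lemma L0abs_mul (ξ η : Ω →ₘ[P] ℂ) : L0abs (ξ * η) = L0abs ξ * L0abs η :=
  AEEqFun.ext <| by
    filter_upwards [L0abs_ae (ξ * η), L0abs_ae ξ, L0abs_ae η, mul_ae ξ η,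
      mul_ae (L0abs ξ) (L0abs η)] with ω h hξ hη hm hm'
    rw [h, hm, hm', hξ, hη, norm_mul]

lemma L0abs_ofRealC_ae (ζ : Ω →ₘ[P] ℝ) : ∀ᵐ ω ∂P, L0abs (ofRealC ζ) ω = |ζ ω| := by
  filter_upwards [L0abs_ae (ofRealC ζ), AEEqFun.coeFn_comp _ Complex.continuous_ofReal ζ]
    with ω h hζ
  rw [h, ofRealC, hζ, Function.comp_apply, Complex.norm_real, Real.norm_eq_abs]

lemma le_mul_of_forall_le_add_mul {a b c : Ω →ₘ[P] ℝ}
    (h : ∀ ε, L0pos ε → a ≤ (b + ε) * c) : a ≤ b * c := by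
  have hm : ∀ᵐ ω ∂P, ∀ m : ℕ, a ω ≤ (b ω + 1 / (m + 1)) * c ω := by
    refine ae_all_iff.2 fun m => ?_
    set ε := AEEqFun.const Ω (μ := P) (1 / (m + 1) : ℝ)
    have hε : ∀ᵐ ω ∂P, ε ω = 1 / (m + 1) := AEEqFun.coeFn_const _ _
    have hεpos : L0pos ε := hε.mono fun ω h => h ▸ Nat.one_div_pos_of_nat
    filter_upwards [le_ae (h ε hεpos), mul_ae (b + ε) c, add_ae b ε, hε] with ω h1 h2 h3 h4
    rwa [h2, h3, h4] at h1
  refine le_of_ae ?_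
  filter_upwards [hm, mul_ae b c] with ω hm hbc
  rw [hbc]
  have : Tendsto (fun m : ℕ => (b ω + 1 / (m + 1)) * c ω) atTop (𝓝 (b ω * c ω)) := by
    simpa using (tendsto_one_div_add_atTop_nhds_zero_nat.const_add (b ω)).mul_const (c ω)
  exact ge_of_tendsto' this hm

variable {E : Type*} [AddCommGroup E] [Module (Ω →ₘ[P] ℂ) E] {nrm : E → Ω →ₘ[P] ℝ}

lemma IsRNNorm.map_zero (hnrm : IsRNNorm nrm) : nrm 0 = 0 := (hnrm.eq_zero_iff 0).2 rfl

variable [IsFiniteMeasure P] {g : E →ₗ[Ω →ₘ[P] ℂ] (Ω →ₘ[P] ℂ)}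

lemma isLUB_dnorm (hnrm : IsRNNorm nrm) (hg : g ∈ rdual nrm) :
    IsLUB {a | ∃ y : E, nrm y ≤ 1 ∧ a = L0abs (g y)} (dnorm nrm g) := by
  obtain ⟨η, hη0, hη⟩ := hg
  have hex : ∃ s, IsLUB {a | ∃ y : E, nrm y ≤ 1 ∧ a = L0abs (g y)} s := by
    refine AEEqFun.exists_isLUB ⟨_, 0, hnrm.map_zero ▸ zero_le_one, rfl⟩ ⟨η, ?_⟩
    rintro _ ⟨y, hy, rfl⟩
    calc L0abs (g y) ≤ η * nrm y := hη y
      _ ≤ η * 1 := mul_le_mul_of_nonneg_left hy hη0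
      _ = η := mul_one η
  rw [dnorm, dif_pos hex]
  exact hex.choose_spec

lemma dnorm_nonneg (hnrm : IsRNNorm nrm) (hg : g ∈ rdual nrm) : 0 ≤ dnorm nrm g :=
  (L0abs_nonneg _).trans ((isLUB_dnorm hnrm hg).1 ⟨0, hnrm.map_zero ▸ zero_le_one, rfl⟩)

lemma L0abs_apply_le_dnorm_mul (hnrm : IsRNNorm nrm) (hg : g ∈ rdual nrm) (x : E) :
    L0abs (g x) ≤ dnorm nrm g * nrm x := by
  set ζ := (nrm x).compMeasurable (·⁻¹) measurable_inv
  have hζ : ∀ᵐ ω ∂P, ζ ω = (nrm x ω)⁻¹ := AEEqFun.coeFn_compMeasurable _ _ _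
  have hN : ∀ᵐ ω ∂P, 0 ≤ nrm x ω := by
    filter_upwards [le_ae (hnrm.nonneg x), zero_ae ℝ] with ω h h0
    rwa [h0] at h
  have hy : nrm (ofRealC ζ • x) ≤ 1 := by
    rw [hnrm.smul_eq]
    refine le_of_ae ?_
    filter_upwards [mul_ae (L0abs (ofRealC ζ)) (nrm x), L0abs_ofRealC_ae ζ, hζ, one_ae ℝ, hN]
      with ω h1 h2 h3 h4 hN
    rw [h1, h2, h3, h4]
    rcases hN.eq_or_lt with h0 | hpos
    · simp [← h0]
    · rw [abs_of_pos (inv_pos.2 hpos), inv_mul_cancel₀ hpos.ne']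
  have hD : L0abs (ofRealC ζ) * L0abs (g x) ≤ dnorm nrm g := by
    simpa only [map_smul, smul_eq_mul, L0abs_mul] using (isLUB_dnorm hnrm hg).1 ⟨_, hy, rfl⟩
  have hD0 := dnorm_nonneg hnrm hg
  obtain ⟨η, -, hη⟩ := hg
  refine le_of_ae ?_
  filter_upwards [le_ae hD, mul_ae (L0abs (ofRealC ζ)) (L0abs (g x)), L0abs_ofRealC_ae ζ, hζ,
    le_ae (hη x), mul_ae η (nrm x), mul_ae (dnorm nrm g) (nrm x), le_ae hD0, zero_ae ℝ, hN]
    with ω hD h1 h2 h3 hη h4 h5 hD0 h0 hN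
  rw [h1, h2, h3] at hD
  rw [h4] at hη
  rw [h0] at hD0
  rw [h5]
  rcases hN.eq_or_lt with hN0 | hpos
  · -- where `nrm x` vanishes, boundedness of `g` forces `g x` to vanish as well
    rw [← hN0, mul_zero] at hη ⊢
    exact hη
  · rw [abs_of_pos (inv_pos.2 hpos), inv_mul_le_iff₀ hpos] at hD
    linarith [mul_comm (dnorm nrm g ω) (nrm x ω)]

end RNM

open MeasureTheory RNM in
theorem helly_necessity_general {Ω : Type} [MeasurableSpace Ω] {P : Measure Ω}
    [IsProbabilityMeasure P] {E : Type*} [AddCommGroup E] [Module (Ω →ₘ[P] ℂ) E]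
    (nrm : E → Ω →ₘ[P] ℝ) (hnrm : IsRNNorm nrm) (n : ℕ)
    (f : Fin n → (E →ₗ[Ω →ₘ[P] ℂ] (Ω →ₘ[P] ℂ))) (hf : ∀ i, f i ∈ rdual nrm)
    (ξ : Fin n → Ω →ₘ[P] ℂ) (β : Ω →ₘ[P] ℝ)
    (hsol : ∀ ε : Ω →ₘ[P] ℝ, L0pos ε →
      ∃ x : E, (∀ i, f i x = ξ i) ∧ nrm x ≤ β + ε) :
    ∀ lam : Fin n → Ω →ₘ[P] ℂ,
      L0abs (∑ k, lam k * ξ k) ≤ β * dnorm nrm (∑ k, lam k • f k) := by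
  intro lam
  set g := ∑ k, lam k • f k
  have hg : g ∈ rdual nrm := Submodule.sum_mem _ fun k _ => Submodule.smul_mem _ _ (hf k)
  refine le_mul_of_forall_le_add_mul fun ε hε => ?_
  obtain ⟨x, hx, hxβ⟩ := hsol ε hε
  have hgx : g x = ∑ k, lam k * ξ k := by
    simp only [g, LinearMap.sum_apply, LinearMap.smul_apply, smul_eq_mul, hx]
  calc L0abs (∑ k, lam k * ξ k) = L0abs (g x) := by rw [hgx]
    _ ≤ dnorm nrm g * nrm x := L0abs_apply_le_dnorm_mul hnrm hg x
    _ ≤ dnorm nrm g * (β + ε) := mul_le_mul_of_nonneg_left hxβ (dnorm_nonneg hnrm hg)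
    _ = (β + ε) * dnorm nrm g := mul_comm _ _

open MeasureTheory RNM in
/-- Helly theorem in `RN` modules, necessity (Theorem 3.2, "⇒"): if the random linear
equations `fᵢ(x) = ξᵢ` admit, for each `ε ∈ L⁰₊₊`, a solution of random norm `≤ β + ε`,
then `|Σ λₖ ξₖ| ≤ β ‖Σ λₖ fₖ‖*` for all `λ₁,…,λₙ ∈ L⁰(𝓕,ℂ)`. -/
theorem helly_necessity {Ω : Type} [MeasurableSpace Ω] {P : Measure Ω}
    [IsProbabilityMeasure P] {E : Type*} [AddCommGroup E] [Module (Ω →ₘ[P] ℂ) E]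
    (nrm : E → Ω →ₘ[P] ℝ) (hnrm : IsRNNorm nrm) (n : ℕ)
    (f : Fin n → (E →ₗ[Ω →ₘ[P] ℂ] (Ω →ₘ[P] ℂ))) (hf : ∀ i, f i ∈ rdual nrm)
    (ξ : Fin n → Ω →ₘ[P] ℂ) (β : Ω →ₘ[P] ℝ) (hβ : 0 ≤ β)
    (hsol : ∀ ε : Ω →ₘ[P] ℝ, L0pos ε →
      ∃ x : E, (∀ i, f i x = ξ i) ∧ nrm x ≤ β + ε) :
    ∀ lam : Fin n → Ω →ₘ[P] ℂ,
      L0abs (∑ k, lam k * ξ k) ≤ β * dnorm nrm (∑ k, lam k • f k) :=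
  helly_necessity_general nrm hnrm n f hf ξ β hsol
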